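/- arXiv:2205.14414 — 4 statements merged into one kernel-verified Lean document; each statement's English description precedes it below -/
import Mathlib

section
/- Let m be a positive natural number and let x, y : Fin m → ℝ satisfy x k > 0 and y k > 0 for all k, together with the constraint ∑ k, x k = ∑ k, y k. Define the authalic energy E_A = (∑ k, (x k)^2 / y k) − (∑ k, x k). Then E_A ≥ 0, and E_A = 0 if and only if x k = y k for all k. -/
theorem authalic_energy_nonneg (m : ℕ) (hm : 0 < m) (x y : Fin m → ℝ)
    (hx : ∀ k, 0 < x k) (hy : ∀ k, 0 < y k)
    (hsum : ∑ k, x k = ∑ k, y k) :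
    (∑ k, (x k) ^ 2 / y k) - (∑ k, x k) ≥ 0 ∧
      ((∑ k, (x k) ^ 2 / y k) - (∑ k, x k) = 0 ↔ ∀ k, x k = y k) := by
  have key : (∑ k, (x k) ^ 2 / y k) - (∑ k, x k)
      = ∑ k, (x k - y k) ^ 2 / y k := by
    have h1 : ∀ k : Fin m, (x k - y k) ^ 2 / y k
        = (x k) ^ 2 / y k - 2 * x k + y k := by
      intro k
      field_simp [(hy k).ne']
      ring
    rw [Finset.sum_congr rfl fun k _ => h1 k]
    rw [Finset.sum_add_distrib, Finset.sum_sub_distrib, ← Finset.mul_sum,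
      ← hsum]
    ring
  have hterm : ∀ k : Fin m, 0 ≤ (x k - y k) ^ 2 / y k := fun k =>
    div_nonneg (sq_nonneg _) (hy k).le
  constructor
  · rw [key]; exact Finset.sum_nonneg fun k _ => hterm k
  · rw [key]
    constructor
    · intro h k
      have := (Finset.sum_eq_zero_iff_of_nonneg fun k _ => hterm k).mp h k
        (Finset.mem_univ k)
      have hk : (x k - y k) ^ 2 = 0 := by
        rcases div_eq_zero_iff.mp this with h' | h'
        · exact h'
        · exact absurd h' (hy k).ne'
      have := pow_eq_zero_iff (n := 2) (by norm_num) |>.mp hk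
      linarith
    · intro h
      apply Finset.sum_eq_zero
      intro k _
      rw [h k]; simp
end

section
/- For any three points a, b, c in EuclideanSpace ℝ (Fin 2), let S = (1/2) * ((b 0 − a 0) * (c 1 − a 1) − (b 1 − a 1) * (c 0 − a 0)) denote the signed area of the triangle [a,b,c]. Then ⟪a − c, b − c⟫ * ‖a − b‖^2 + ⟪b − a, c − a⟫ * ‖b − c‖^2 + ⟪a − b, c − b⟫ * ‖a − c‖^2 = 8 * S^2, where ⟪·,·⟫ is the real inner product. -/
open scoped RealInnerProductSpace

theorem stretch_energy_geometric_identity (a b c : EuclideanSpace ℝ (Fin 2))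
    (S : ℝ)
    (hS : S = (1 / 2) * ((b 0 - a 0) * (c 1 - a 1) - (b 1 - a 1) * (c 0 - a 0))) :
    ⟪a - c, b - c⟫ * ‖a - b‖ ^ 2 + ⟪b - a, c - a⟫ * ‖b - c‖ ^ 2 +
      ⟪a - b, c - b⟫ * ‖a - c‖ ^ 2 = 8 * S ^ 2 := by
  rw [← real_inner_self_eq_norm_sq, ← real_inner_self_eq_norm_sq,
    ← real_inner_self_eq_norm_sq]
  simp only [PiLp.inner_apply, Fin.sum_univ_two, PiLp.sub_apply,
    RCLike.inner_apply, conj_trivial, hS]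
  ring
end

section
/- Let a = (a₁,a₂), b = (b₁,b₂), c = (c₁,c₂) be points of ℝ² and let S = (1/2)(a₁b₂ − b₁a₂ + c₁a₂ − a₁c₂ + b₁c₂ − c₁b₂) be the signed area of the triangle [a,b,c]. Let M be the symmetric 3×3 real matrix with entries M₁₂ = M₂₁ = −((a₁−c₁)(b₁−c₁)+(a₂−c₂)(b₂−c₂)), M₁₃ = M₃₁ = −((a₁−b₁)(c₁−b₁)+(a₂−b₂)(c₂−b₂)), M₂₃ = M₃₂ = −((a₁−b₁)(a₁−c₁)+(a₂−b₂)(a₂−c₂)), and diagonal entries chosen so that every row sums to zero (M₁₁ = −M₁₂ − M₁₃, M₂₂ = −M₂₁ − M₂₃, M₃₃ = −M₃₁ − M₃₂). Then, with v¹ = (a₁,b₁,c₁) and v² = (a₂,b₂,c₂), the quadratic forms satisfy v¹ᵀ M v¹ + v²ᵀ M v² = 8 * S^2. -/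
open scoped Matrix

theorem stretch_energy_per_face (a₁ a₂ b₁ b₂ c₁ c₂ : ℝ)
    (S : ℝ)
    (hS : S = (1 / 2) * (a₁ * b₂ - b₁ * a₂ + c₁ * a₂ - a₁ * c₂ + b₁ * c₂ - c₁ * b₂))
    (M : Matrix (Fin 3) (Fin 3) ℝ)
    (hM₁₂ : M 0 1 = -((a₁ - c₁) * (b₁ - c₁) + (a₂ - c₂) * (b₂ - c₂)))
    (hM₂₁ : M 1 0 = -((a₁ - c₁) * (b₁ - c₁) + (a₂ - c₂) * (b₂ - c₂)))
    (hM₁₃ : M 0 2 = -((a₁ - b₁) * (c₁ - b₁) + (a₂ - b₂) * (c₂ - b₂)))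
    (hM₃₁ : M 2 0 = -((a₁ - b₁) * (c₁ - b₁) + (a₂ - b₂) * (c₂ - b₂)))
    (hM₂₃ : M 1 2 = -((a₁ - b₁) * (a₁ - c₁) + (a₂ - b₂) * (a₂ - c₂)))
    (hM₃₂ : M 2 1 = -((a₁ - b₁) * (a₁ - c₁) + (a₂ - b₂) * (a₂ - c₂)))
    (hM₁₁ : M 0 0 = -(M 0 1) - M 0 2)
    (hM₂₂ : M 1 1 = -(M 1 0) - M 1 2)
    (hM₃₃ : M 2 2 = -(M 2 0) - M 2 1) :
    ![a₁, b₁, c₁] ⬝ᵥ M.mulVec ![a₁, b₁, c₁] +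
      ![a₂, b₂, c₂] ⬝ᵥ M.mulVec ![a₂, b₂, c₂] = 8 * S ^ 2 := by
  subst hS
  simp [dotProduct, Matrix.mulVec, Fin.sum_univ_three, hM₁₁, hM₂₂, hM₃₃,
    hM₁₂, hM₂₁, hM₁₃, hM₃₁, hM₂₃, hM₃₂]
  ring
end

section
/- Let a = (a₁,a₂), b = (b₁,b₂), c = (c₁,c₂) be points of ℝ² and let S = (1/2)(a₁b₂ − b₁a₂ + c₁a₂ − a₁c₂ + b₁c₂ − c₁b₂) be the signed area of the triangle [a,b,c]. Let M be the symmetric 3×3 real matrix with entries M₁₂ = M₂₁ = −((a₁−c₁)(b₁−c₁)+(a₂−c₂)(b₂−c₂)), M₁₃ = M₃₁ = −((a₁−b₁)(c₁−b₁)+(a₂−b₂)(c₂−b₂)), M₂₃ = M₃₂ = −((a₁−b₁)(a₁−c₁)+(a₂−b₂)(a₂−c₂)), and diagonal entries chosen so that every row sums to zero. Then M.mulVec (a₁,b₁,c₁) = 2S • (b₂−c₂, c₂−a₂, a₂−b₂) and M.mulVec (a₂,b₂,c₂) = 2S • (c₁−b₁, a₁−c₁, b₁−a₁). -/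
theorem stretch_laplacian_mulVec (a₁ a₂ b₁ b₂ c₁ c₂ : ℝ)
    (S : ℝ)
    (hS : S = (1 / 2) * (a₁ * b₂ - b₁ * a₂ + c₁ * a₂ - a₁ * c₂ + b₁ * c₂ - c₁ * b₂))
    (M : Matrix (Fin 3) (Fin 3) ℝ)
    (hM₁₂ : M 0 1 = -((a₁ - c₁) * (b₁ - c₁) + (a₂ - c₂) * (b₂ - c₂)))
    (hM₂₁ : M 1 0 = -((a₁ - c₁) * (b₁ - c₁) + (a₂ - c₂) * (b₂ - c₂)))
    (hM₁₃ : M 0 2 = -((a₁ - b₁) * (c₁ - b₁) + (a₂ - b₂) * (c₂ - b₂)))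
    (hM₃₁ : M 2 0 = -((a₁ - b₁) * (c₁ - b₁) + (a₂ - b₂) * (c₂ - b₂)))
    (hM₂₃ : M 1 2 = -((a₁ - b₁) * (a₁ - c₁) + (a₂ - b₂) * (a₂ - c₂)))
    (hM₃₂ : M 2 1 = -((a₁ - b₁) * (a₁ - c₁) + (a₂ - b₂) * (a₂ - c₂)))
    (hM₁₁ : M 0 0 = -(M 0 1) - M 0 2)
    (hM₂₂ : M 1 1 = -(M 1 0) - M 1 2)
    (hM₃₃ : M 2 2 = -(M 2 0) - M 2 1) :
    M.mulVec ![a₁, b₁, c₁] = (2 * S) • ![b₂ - c₂, c₂ - a₂, a₂ - b₂] ∧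
      M.mulVec ![a₂, b₂, c₂] = (2 * S) • ![c₁ - b₁, a₁ - c₁, b₁ - a₁] := by
  constructor <;>
  · funext i
    fin_cases i <;>
    · simp [Matrix.mulVec, dotProduct, Fin.sum_univ_three, hS, hM₁₂, hM₂₁,
        hM₁₃, hM₃₁, hM₂₃, hM₃₂, hM₁₁, hM₂₂, hM₃₃]
      ring
end
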